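/- Let R be a commutative ring, M and N R-modules, and f a polynomial law from M to N that is homogeneous of degree d. Then for every integer n with 0 ≤ n ≤ d and all elements x, v ∈ M, the n-th directional derivative satisfies (∇_v^n f)(x) = (∇_x^{d−n} f)(v), where both sides are evaluated over R. -/

import Mathlib

/-!
STATEMENT 7: Let R be a commutative ring, M and N R-modules, and f a polynomial law
from M to N that is homogeneous of degree d.  Then for every integer n with
0 ≤ n ≤ d and all elements x, v ∈ M, the n-th directional derivative satisfies
(∇_v^n f)(x) = (∇_x^{d−n} f)(v), where both sides are evaluated over R.
-/

open TensorProduct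

universe u

/-- A polynomial law (in the sense of Roby) from `M` to `N`. -/
structure PolyLaw (R : Type u) [CommRing R] (M N : Type u)
    [AddCommGroup M] [Module R M] [AddCommGroup N] [Module R N] : Type (u + 1) where
  toFun : ∀ (S : Type u) [CommRing S] [Algebra R S], S ⊗[R] M → S ⊗[R] N
  isCompat : ∀ (S S' : Type u) [CommRing S] [Algebra R S] [CommRing S'] [Algebra R S']
      (φ : S →ₐ[R] S') (x : S ⊗[R] M),
      LinearMap.rTensor N φ.toLinearMap (toFun S x) =
        toFun S' (LinearMap.rTensor M φ.toLinearMap x)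

/-- Homogeneity of degree `d` of a polynomial law. -/
def PolyLaw.IsHomogeneous {R : Type u} [CommRing R] {M N : Type u}
    [AddCommGroup M] [Module R M] [AddCommGroup N] [Module R N]
    (d : ℕ) (f : PolyLaw R M N) : Prop :=
  ∀ (S : Type u) [CommRing S] [Algebra R S] (s : S) (x : S ⊗[R] M),
    f.toFun S (s • x) = s ^ d • f.toFun S x

/-- The `n`-th directional derivative of `f` in the direction `v`, evaluated over `R`
at `x ∈ M`: the coefficient of `t^n` in `f_{R[t]}(x + v ⊗ t) ∈ N ⊗ R[t]`. -/
noncomputable def PolyLaw.dirDeriv {R : Type u} [CommRing R] {M N : Type u}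
    [AddCommGroup M] [Module R M] [AddCommGroup N] [Module R N]
    (f : PolyLaw R M N) (n : ℕ) (v x : M) : N :=
  TensorProduct.lid R N
    (LinearMap.rTensor N (Polynomial.lcoeff R n)
      (f.toFun (Polynomial R)
        ((1 : Polynomial R) ⊗ₜ[R] x + (Polynomial.X : Polynomial R) ⊗ₜ[R] v)))

/-!
Over `R[T,T⁻¹]`, homogeneity gives `f(T x + v) = T^d f(x + T⁻¹ v)`. Both sides are base changes
of values of `f` over `R[X]`, along `X ↦ T` and `X ↦ T⁻¹`. Comparing coefficients of `T^(d-n)`: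
on the left this is `(∇_x^{d-n} f)(v)`, on the right the coefficient of `T^(-n)` in
`f(x + T⁻¹ v)`, i.e. `(∇_v^n f)(x)`.
-/

open Polynomial LaurentPolynomial

namespace LaurentPolynomial

variable {R : Type*} [CommSemiring R]

@[simp]
lemma coeff_toLaurent_natCast (p : R[X]) (k : ℕ) : (toLaurent p).coeff k = p.coeff k := by
  rw [coeff_toLaurent]
  exact Finsupp.mapDomain_apply Nat.castEmbedding.injective _ k

lemma coeff_mul_T (f : R[T;T⁻¹]) (d k : ℤ) : (f * T d).coeff k = f.coeff (k - d) := by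
  rw [T, AddMonoidAlgebra.coeff_mul_single_apply, mul_one, sub_eq_add_neg]

variable (R) in
def lcoeff (k : ℤ) : R[T;T⁻¹] →ₗ[R] R where
  toFun f := f.coeff k
  map_add' _ _ := rfl
  map_smul' _ _ := rfl

@[simp]
lemma lcoeff_apply (k : ℤ) (f : R[T;T⁻¹]) : lcoeff R k f = f.coeff k := rfl

lemma lcoeff_comp_toLaurent (k : ℕ) :
    lcoeff R k ∘ₗ toLaurentAlg.toLinearMap = Polynomial.lcoeff R k :=
  LinearMap.ext (coeff_toLaurent_natCast · k)

lemma lcoeff_comp_T_mul_invert_toLaurent (d : ℤ) (n : ℕ) :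
    lcoeff R (d - n) ∘ₗ Algebra.lsmul R R R[T;T⁻¹] (T d : R[T;T⁻¹]) ∘ₗ
      ((invert (R := R)).toAlgHom.comp toLaurentAlg).toLinearMap = Polynomial.lcoeff R n :=
  LinearMap.ext fun p => by simp [coeff_mul_T, -coeff_toLaurent]

end LaurentPolynomial

namespace PolyLaw

variable {R : Type u} [CommRing R] {M N : Type u}
  [AddCommGroup M] [Module R M] [AddCommGroup N] [Module R N]

lemma rTensor_toLaurent_toFun_X_tmul_add {d : ℕ} {f : PolyLaw R M N} (hf : f.IsHomogeneous d)
    (x v : M) :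
    LinearMap.rTensor N toLaurentAlg.toLinearMap (f.toFun R[X] (X ⊗ₜ x + 1 ⊗ₜ v)) =
      (T d : R[T;T⁻¹]) •
        LinearMap.rTensor N ((invert (R := R)).toAlgHom.comp toLaurentAlg).toLinearMap
          (f.toFun R[X] (1 ⊗ₜ x + X ⊗ₜ v)) := by
  rw [f.isCompat, f.isCompat]
  simp only [map_add, LinearMap.rTensor_tmul, AlgHom.toLinearMap_apply, map_one,
    AlgHom.comp_apply, toLaurentAlg_apply, toLaurent_X, AlgEquiv.coe_toAlgHom, invert_T]
  rw [← mul_one (d : ℤ), ← T_pow, ← hf, smul_add, smul_tmul', smul_tmul', smul_eq_mul,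
    smul_eq_mul, mul_one, ← T_add, add_neg_cancel, T_zero]

end PolyLaw

theorem stmt_7 (R : Type u) [CommRing R] (M N : Type u)
    [AddCommGroup M] [Module R M] [AddCommGroup N] [Module R N]
    (d : ℕ) (f : PolyLaw R M N) (hf : f.IsHomogeneous d)
    (n : ℕ) (hn : n ≤ d) (x v : M) :
    f.dirDeriv n v x = f.dirDeriv (d - n) x v := by
  have key := congrArg
    (fun z ↦ TensorProduct.lid R N
      (LinearMap.rTensor N (LaurentPolynomial.lcoeff R (d - n : ℕ)) z))
    (PolyLaw.rTensor_toLaurent_toFun_X_tmul_add hf x v)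
  simp only [← LinearMap.rTensor_comp_apply,
    TensorProduct.AlgebraTensorModule.smul_eq_lsmul_rTensor, lcoeff_comp_toLaurent] at key
  rw [Nat.cast_sub hn, lcoeff_comp_T_mul_invert_toLaurent] at key
  rw [PolyLaw.dirDeriv, PolyLaw.dirDeriv, add_comm ((1 : R[X]) ⊗ₜ v), key]
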